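/- arXiv:1401.4880 — 6 statements merged into one kernel-verified Lean document; each statement's English description precedes it below -/
import Mathlib

section
/- Let G = ⨁_{i ∈ ℕ} 𝔽_p be the direct sum of countably many copies of 𝔽_p with the bilinear form (a_i)·(b_i) = Σ_i a_i b_i. For any elements c, u_i, v_j, w_k ∈ G (finitely many), elements ε, ε_i ∈ 𝔽_p: if there exists x ∈ G with x·u_i = ε_i for all i, then there exists x ∈ G with x·u_i = ε_i for all i, x·x = ε, and x ≠ v_j for all j. -/
/-!
Take any solution `x₀` and add to it a vector `w` supported on fresh coordinates, outside the
supports of `x₀`, the `uᵢ` and the `vⱼ`. Then `w` is orthogonal to `x₀` and to every `uᵢ`, so the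
linear conditions survive and `(x₀ + w) · (x₀ + w) = x₀ · x₀ + w · w`. Since every element of `𝔽_p`
is a sum of two squares, `w = (1, b, c)` on three fresh coordinates achieves any value of `w · w`,
and its nonzero entry `1` at a coordinate where every `vⱼ` vanishes keeps `x₀ + w` away from
the `vⱼ`.
-/

namespace Finsupp

section Dot

variable {α R : Type*} [CommSemiring R]

def dot (x y : α →₀ R) : R := x.sum fun n a => a * y n

theorem dot_add_left (x y z : α →₀ R) : dot (x + y) z = dot x z + dot y z :=
  sum_add_index' (fun _ => zero_mul _) fun _ _ _ => add_mul _ _ _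

theorem dot_add_right (x y z : α →₀ R) : dot x (y + z) = dot x y + dot x z := by
  simp only [dot, add_apply, mul_add, sum_add]

theorem dot_single_left (m : α) (c : R) (z : α →₀ R) : dot (single m c) z = c * z m :=
  sum_single_index (zero_mul _)

theorem dot_eq_zero_of_disjoint {x y : α →₀ R} (h : Disjoint x.support y.support) :
    dot x y = 0 :=
  Finset.sum_eq_zero fun _ hn => by
    simp only [notMem_support_iff.mp (Finset.disjoint_left.mp h hn), mul_zero]

theorem dot_add_left_of_disjoint (x : α →₀ R) {w u : α →₀ R} (h : Disjoint w.support u.support) :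
    dot (x + w) u = dot x u := by
  rw [dot_add_left, dot_eq_zero_of_disjoint h, add_zero]

theorem dot_add_self_of_disjoint {x w : α →₀ R} (h : Disjoint x.support w.support) :
    dot (x + w) (x + w) = dot x x + dot w w := by
  rw [dot_add_left, dot_add_right, dot_add_right, dot_eq_zero_of_disjoint h,
    dot_eq_zero_of_disjoint h.symm, add_zero, zero_add]

end Dot

theorem add_ne_of_disjoint {α M : Type*} [AddCommMonoid M] [DecidableEq α] {x w v : α →₀ M}
    (hw : w ≠ 0) (h : Disjoint w.support (x.support ∪ v.support)) : x + w ≠ v := by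
  obtain ⟨m, hm⟩ := support_nonempty_iff.mpr hw
  have hxv := Finset.disjoint_left.mp h hm
  rw [Finset.mem_union, not_or, notMem_support_iff, notMem_support_iff] at hxv
  intro hv
  apply mem_support_iff.mp hm
  rw [← hxv.2, ← hv, add_apply, hxv.1, zero_add]

theorem exists_ne_zero_disjoint_dot_self_eq (p : ℕ) [Fact p.Prime] (S : Finset ℕ) (d : ZMod p) :
    ∃ w : ℕ →₀ ZMod p, w ≠ 0 ∧ Disjoint w.support S ∧ dot w w = d := by
  obtain ⟨n, hn⟩ := S.exists_nat_subset_range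
  obtain ⟨b, c, hbc⟩ := ZMod.sq_add_sq p (d - 1)
  set w := single n 1 + single (n + 1) b + single (n + 2) c
  have hw₀ : w n = 1 := by simp [w]
  have hw₁ : w (n + 1) = b := by simp [w]
  have hw₂ : w (n + 2) = c := by simp [w]
  refine ⟨w, fun h => by simp [h] at hw₀, ?_, ?_⟩
  · refine Finset.disjoint_left.mpr fun m hm hmS => mem_support_iff.mp hm ?_
    have hmn : m < n := Finset.mem_range.mp (hn hmS)
    simp [w, show n ≠ m by omega, show n + 1 ≠ m by omega,
      show n + 2 ≠ m by omega]
  · rw [show dot w w = 1 * w n + b * w (n + 1) + c * w (n + 2) by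
      simp only [w, dot_add_left, dot_single_left], hw₀, hw₁, hw₂]
    linear_combination hbc

end Finsupp

open Finsupp in
/-- In `G = ⨁_{i ∈ ℕ} 𝔽_p` with the bilinear form `x · y = Σ_i x_i y_i`, any solvable
finite system of linear conditions `x · uᵢ = εᵢ` can be solved while also prescribing the
value of `x · x` and avoiding finitely many prescribed elements. -/
theorem finsupp_dot_solution_adjustment
    (p : ℕ) [Fact p.Prime] (N q : ℕ)
    (u : Fin N → (ℕ →₀ ZMod p)) (v : Fin q → (ℕ →₀ ZMod p))
    (ε : ZMod p) (εs : Fin N → ZMod p)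
    (h : ∃ x : ℕ →₀ ZMod p, ∀ i, (x.sum fun n a => a * u i n) = εs i) :
    ∃ x : ℕ →₀ ZMod p,
      (∀ i, (x.sum fun n a => a * u i n) = εs i) ∧
      (x.sum fun n a => a * x n) = ε ∧
      ∀ j, x ≠ v j := by
  obtain ⟨x₀, hx₀⟩ := h
  obtain ⟨w, hw₀, hw, hww⟩ := exists_ne_zero_disjoint_dot_self_eq p
    (x₀.support ∪ Finset.univ.biUnion (fun i => (u i).support) ∪
      Finset.univ.biUnion (fun j => (v j).support)) (ε - dot x₀ x₀)
  simp only [Finset.disjoint_union_right, Finset.disjoint_biUnion_right, Finset.mem_univ,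
    forall_const] at hw
  obtain ⟨⟨hwx₀, hwu⟩, hwv⟩ := hw
  refine ⟨x₀ + w, fun i => ?_, ?_, fun j => add_ne_of_disjoint hw₀ ?_⟩
  · exact (dot_add_left_of_disjoint x₀ (hwu i)).trans (hx₀ i)
  · change dot (x₀ + w) (x₀ + w) = ε
    rw [dot_add_self_of_disjoint hwx₀.symm, hww, add_sub_cancel]
  · exact Finset.disjoint_union_right.mpr ⟨hwx₀, hwv j⟩
end

section
/- Let G be a group, n ≥ 1, and suppose H_η (η ∈ d^n) is a family of subgroups of G indexed by n-tuples from {0,…,d-1} such that for every ν ∈ d^n there exists c_ν ∈ (⋂_{η ≠ ν} H_η) \ H_ν. Then for every subset J ⊆ d^n, the product c_J := Π_{η ∈ J} c_η (in some fixed order) satisfies: c_J ∈ H_ν if and only if ν ∉ J, provided G is abelian. -/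
open Finset

section
variable {ι G : Type*} [CommGroup G] {H : ι → Subgroup G} {c : ι → G}

theorem Subgroup.prod_mem_of_notMem_of_forall_ne (hc : ∀ η ν, η ≠ ν → c η ∈ H ν)
    {J : Finset ι} {ν : ι} (hν : ν ∉ J) : ∏ η ∈ J, c η ∈ H ν :=
  Subgroup.prod_mem _ fun η hη => hc η ν (ne_of_mem_of_not_mem hη hν)

theorem Subgroup.prod_mem_iff_of_mem_of_forall_ne (hc : ∀ η ν, η ≠ ν → c η ∈ H ν)
    {J : Finset ι} {ν : ι} (hν : ν ∈ J) : ∏ η ∈ J, c η ∈ H ν ↔ c ν ∈ H ν := by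
  classical
  rw [← mul_prod_erase J c hν]
  exact Subgroup.mul_mem_cancel_right _
    (Subgroup.prod_mem_of_notMem_of_forall_ne hc (notMem_erase ν J))

end

/-- Baldwin–Saxl combinatorial core: let `G` be an abelian group and `(H_η)_{η ∈ d^n}` a
family of subgroups such that for every `ν` there is `c_ν` lying in all `H_η` with
`η ≠ ν` but not in `H_ν`. Then for every subset `J ⊆ d^n` the product
`c_J = Π_{η ∈ J} c_η` lies in `H_ν` if and only if `ν ∉ J`. -/
theorem baldwin_saxl_core
    {G : Type*} [CommGroup G] (n d : ℕ)
    (H : (Fin n → Fin d) → Subgroup G) (c : (Fin n → Fin d) → G)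
    (hc : ∀ ν, (∀ η, η ≠ ν → c ν ∈ H η) ∧ c ν ∉ H ν) :
    ∀ (J : Finset (Fin n → Fin d)) (ν : Fin n → Fin d),
      (∏ η ∈ J, c η) ∈ H ν ↔ ν ∉ J := by
  intro J ν
  have hoff : ∀ η ν, η ≠ ν → c η ∈ H ν := fun η ν hne => (hc η).1 ν hne.symm
  by_cases hν : ν ∈ J
  · rw [Subgroup.prod_mem_iff_of_mem_of_forall_ne hoff hν]
    exact iff_of_false (hc ν).2 (not_not_intro hν)
  · exact iff_of_true (Subgroup.prod_mem_of_notMem_of_forall_ne hoff hν) hν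
end

section
/- Let {α_{i,j} : i < n, j < m} be algebraically independent elements over 𝔽_p in a field 𝕂 of characteristic p, and for each η = (i_0,…,i_{n-1}) ∈ m^n set a_η = Π_{l<n} α_{l, i_l}. Then the family {1/a_η : η ∈ m^n} is linearly independent over 𝔽_p. -/
/-! Up to the common factor `(∏ i j, α i j)⁻¹`, the inverse `1 / a_η` is the product of the `α i j`
off the graph of `η`. Distinct `η` have distinct graphs, and products of distinct finite subfamilies
of an algebraically independent family are images of distinct squarefree monomials, hence linearly
independent. -/

open MvPolynomial

theorem MvPolynomial.linearIndependent_prod_X (σ R : Type*) [CommSemiring R] :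
    LinearIndependent R (fun s : Finset σ => ∏ i ∈ s, (X i : MvPolynomial σ R)) := by
  classical
  have hinj : Function.Injective (fun s : Finset σ => ∑ i ∈ s, Finsupp.single i 1) := by
    intro s t hst
    ext i
    have := congrArg (· i) hst
    simp only [Finsupp.finsetSum_apply, Finsupp.single_apply, Finset.sum_ite_eq'] at this
    split_ifs at this <;> simp_all
  convert (basisMonomials σ R).linearIndependent.comp _ hinj with s
  simp [coe_basisMonomials, monomial_sum_one, X]

theorem AlgebraicIndependent.linearIndependent_prod {ι R A : Type*} [CommRing R] [CommRing A]
    [Algebra R A] {x : ι → A} (hx : AlgebraicIndependent R x) :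
    LinearIndependent R (fun s : Finset ι => ∏ i ∈ s, x i) := by
  simpa [Function.comp_def] using
    (linearIndependent_prod_X ι R).map' (aeval x).toLinearMap (LinearMap.ker_eq_bot.mpr hx)

theorem LinearIndependent.const_mul {ι R A : Type*} [CommRing R] [Ring A] [Algebra R A]
    [IsLeftCancelMulZero A] {v : ι → A} (hv : LinearIndependent R v) {c : A} (hc : c ≠ 0) :
    LinearIndependent R (fun i => c * v i) :=
  hv.map' (LinearMap.mulLeft R c) (LinearMap.ker_eq_bot.mpr (mul_right_injective₀ hc))

theorem Finset.inv_prod_eq_inv_prod_univ_mul_prod_compl {ι G : Type*} [Fintype ι]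
    [DecidableEq ι] [CommGroupWithZero G] {x : ι → G} (hx : ∀ i, x i ≠ 0) (s : Finset ι) :
    (∏ i ∈ s, x i)⁻¹ = (∏ i, x i)⁻¹ * ∏ i ∈ sᶜ, x i := by
  have hs : ∏ i ∈ sᶜ, x i ≠ 0 := Finset.prod_ne_zero_iff.mpr fun i _ => hx i
  rw [← s.prod_mul_prod_compl, mul_inv, mul_assoc, inv_mul_cancel₀ hs, mul_one]

namespace Function

variable {α β : Type*} [Fintype α]

def graphFinset (f : α → β) : Finset (α × β) :=
  Finset.univ.map ⟨fun a => (a, f a), fun _ _ h => congrArg Prod.fst h⟩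

theorem graphFinset_injective : Injective (graphFinset : (α → β) → Finset (α × β)) := by
  intro f g hfg
  funext a
  have : (a, f a) ∈ graphFinset g := hfg ▸ Finset.mem_map_of_mem _ (Finset.mem_univ a)
  obtain ⟨a', -, ha'⟩ := Finset.mem_map.mp this
  obtain ⟨rfl, hg⟩ := Prod.mk.inj ha'
  exact hg.symm

theorem prod_graphFinset {M : Type*} [CommMonoid M] (f : α → β) (x : α × β → M) :
    ∏ q ∈ graphFinset f, x q = ∏ a, x (a, f a) :=
  Finset.prod_map _ _ _

end Function

theorem grid_product_inverses_linearly_independent_general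
    {𝕂 : Type*} [Field 𝕂] (p : ℕ) [Fact p.Prime]
    [Algebra (ZMod p) 𝕂]
    (n m : ℕ) (α : Fin n → Fin m → 𝕂)
    (hα : AlgebraicIndependent (ZMod p) (fun q : Fin n × Fin m => α q.1 q.2)) :
    LinearIndependent (ZMod p) (fun η : Fin n → Fin m => (∏ l : Fin n, α l (η l))⁻¹) := by
  classical
  set x : Fin n × Fin m → 𝕂 := fun q => α q.1 q.2
  have hx : ∀ q, x q ≠ 0 := hα.ne_zero
  have off_graph (η : Fin n → Fin m) :
      (∏ l, α l (η l))⁻¹ = (∏ q, x q)⁻¹ * ∏ q ∈ (Function.graphFinset η)ᶜ, x q := by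
    rw [← Finset.inv_prod_eq_inv_prod_univ_mul_prod_compl hx, Function.prod_graphFinset]
  simp_rw [off_graph]
  exact (hα.linearIndependent_prod.comp _
    (compl_injective.comp Function.graphFinset_injective)).const_mul
    (inv_ne_zero (Finset.prod_ne_zero_iff.mpr fun q _ => hx q))

/-- Let `{α_{i,j} : i < n, j < m}` be elements of a field `𝕂` of characteristic `p` that are
algebraically independent over `𝔽_p`, and for `η ∈ m^n` set `a_η = Π_{l<n} α_{l, η(l)}`.
Then the family `{1/a_η : η ∈ m^n}` is linearly independent over `𝔽_p`.
(The `Algebra (ZMod p) 𝕂` structure is unique by `CharP 𝕂 p`.) -/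
theorem grid_product_inverses_linearly_independent
    {𝕂 : Type*} [Field 𝕂] (p : ℕ) [Fact p.Prime] [CharP 𝕂 p]
    [Algebra (ZMod p) 𝕂]
    (n m : ℕ) (α : Fin n → Fin m → 𝕂)
    (hα : AlgebraicIndependent (ZMod p) (fun q : Fin n × Fin m => α q.1 q.2)) :
    LinearIndependent (ZMod p) (fun η : Fin n → Fin m => (∏ l : Fin n, α l (η l))⁻¹) :=
  grid_product_inverses_linearly_independent_general p n m α hα
end

section
/- Let (K, v) be a henselian valued field of characteristic p > 0 such that the Artin–Schreier map x ↦ x^p - x is surjective on K. Then the value group Γ of v is p-divisible. -/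
/-!
If `v a > 1` and `a = y ^ p - y`, then `v y > 1` (otherwise the ultrametric inequality gives
`v a ≤ 1`), so `y ^ p` strictly dominates `y` and `v a = (v y) ^ p`. Hence every value `> 1`
is a `p`-th power, and inversion transfers this to values `< 1`.
-/

namespace Valuation

variable {K : Type*} [Field K] {Γ₀ : Type*} [LinearOrderedCommGroupWithZero Γ₀]
  (v : Valuation K Γ₀)

theorem one_lt_of_one_lt_map_pow_sub_self {n : ℕ} {y : K} (h : 1 < v (y ^ n - y)) :
    1 < v y := by
  by_contra! hy
  have : v (y ^ n - y) ≤ 1 :=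
    v.map_sub_le (by rw [map_pow]; exact pow_le_one₀ zero_le hy) hy
  exact this.not_gt h

theorem map_pow_sub_self_of_one_lt {n : ℕ} (hn : 2 ≤ n) {y : K} (hy : 1 < v y) :
    v (y ^ n - y) = v y ^ n := by
  have hlt : v y < v (y ^ n) := by
    rw [map_pow]
    simpa using pow_lt_pow_right₀ hy (by omega : 1 < n)
  rw [v.map_sub_eq_of_lt_left hlt, map_pow]

theorem exists_map_pow_eq_of_one_lt {n : ℕ} (hn : 2 ≤ n)
    (hsurj : Function.Surjective (fun x : K => x ^ n - x)) {a : K} (ha : 1 < v a) :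
    ∃ y : K, y ≠ 0 ∧ v y ^ n = v a := by
  obtain ⟨y, rfl⟩ := hsurj a
  have hy : 1 < v y := v.one_lt_of_one_lt_map_pow_sub_self ha
  exact ⟨y, v.ne_zero_iff.mp (zero_lt_one.trans hy).ne',
    (v.map_pow_sub_self_of_one_lt hn hy).symm⟩

theorem exists_map_pow_eq_of_forall_one_lt {n : ℕ}
    (h : ∀ a : K, 1 < v a → ∃ y : K, y ≠ 0 ∧ v y ^ n = v a) {x : K} (hx : x ≠ 0) :
    ∃ y : K, y ≠ 0 ∧ v y ^ n = v x := by
  rcases lt_trichotomy (v x) 1 with hlt | heq | hgt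
  · have hinv : 1 < v x⁻¹ := by
      rw [map_inv₀]
      exact one_lt_inv₀ (zero_lt_iff.mpr (v.ne_zero_iff.mpr hx)) |>.mpr hlt
    obtain ⟨y, hy, hyx⟩ := h x⁻¹ hinv
    exact ⟨y⁻¹, inv_ne_zero hy, by rw [map_inv₀, inv_pow, hyx, map_inv₀, inv_inv]⟩
  · exact ⟨1, one_ne_zero, by simp [heq]⟩
  · exact h x hgt

end Valuation

theorem value_group_p_divisible_of_artin_schreier_surjective_general
    {K : Type*} [Field K] (p : ℕ) [Fact p.Prime]
    {Γ₀ : Type*} [LinearOrderedCommGroupWithZero Γ₀]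
    (v : Valuation K Γ₀)
    (hAS : Function.Surjective (fun x : K => x ^ p - x)) :
    ∀ x : K, x ≠ 0 → ∃ y : K, y ≠ 0 ∧ (v y) ^ p = v x := fun _ hx =>
  v.exists_map_pow_eq_of_forall_one_lt
    (fun _ ha => v.exists_map_pow_eq_of_one_lt (Fact.out : p.Prime).two_le hAS ha) hx

/-- Let `(K, v)` be a henselian valued field of characteristic `p > 0` on which the
Artin–Schreier map `x ↦ x^p - x` is surjective. Then the value group of `v` is
`p`-divisible: for every `x ≠ 0` there is `y ≠ 0` with `(v y)^p = v x` (multiplicative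
notation for `p·δ = γ`). -/
theorem value_group_p_divisible_of_artin_schreier_surjective
    {K : Type*} [Field K] (p : ℕ) [Fact p.Prime] [CharP K p]
    {Γ₀ : Type*} [LinearOrderedCommGroupWithZero Γ₀]
    (v : Valuation K Γ₀)
    [HenselianLocalRing v.valuationSubring]
    (hAS : Function.Surjective (fun x : K => x ^ p - x)) :
    ∀ x : K, x ≠ 0 → ∃ y : K, y ≠ 0 ∧ (v y) ^ p = v x :=
  value_group_p_divisible_of_artin_schreier_surjective_general p v hAS
end

section
/- Let K be a field of characteristic p > 0 such that the Artin–Schreier map ℘(x) = x^p - x is surjective on K. Then K has no Galois extension of degree p. -/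
open Module

/-!
Let `σ` generate the cyclic group `Gal(L/K)` of order `p`. In characteristic `p`,
`(σ - 1)^p = σ^p - 1 = 0`, so `σ - 1` is a nonzero nilpotent `K`-linear map and some `x` has
`σ x - x` nonzero and fixed by `σ`, i.e. in `Kˣ`; rescaling gives `β` with `σ β = β + 1`.
Then `β^p - β` is fixed by `σ`, hence lies in `K`, say `β^p - β = c^p - c`. Now `γ = β - c`
satisfies `γ^p = γ`, so `γ` lies in the prime field and is fixed by `σ`, contradicting
`σ γ = γ + 1`.
-/

theorem isNilpotent_sub_one_of_pow_char_eq_one {R : Type*} [Ring R] (p : ℕ) [Fact p.Prime]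
    [CharP R p] {a : R} (ha : a ^ p = 1) : IsNilpotent (a - 1) :=
  ⟨p, by rw [sub_pow_char_of_commute p (Commute.one_right a), ha, one_pow, sub_self]⟩

theorem Module.End.exists_apply_ne_zero_and_apply_apply_eq_zero {R M : Type*} [Semiring R]
    [AddCommMonoid M] [Module R M] {D : Module.End R M} (hD : IsNilpotent D) (hD0 : D ≠ 0) :
    ∃ x, D x ≠ 0 ∧ D (D x) = 0 := by
  by_contra! h
  have hker : ∀ n : ℕ, ∀ x, (D ^ (n + 1)) x = 0 → D x = 0 := by
    intro n
    induction n with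
    | zero => simp
    | succ n ih =>
      intro x hx
      by_contra hDx
      exact h x hDx (ih (D x) (by rwa [pow_succ, Module.End.mul_apply] at hx))
  obtain ⟨n, hn⟩ := hD
  refine hD0 (LinearMap.ext fun x => hker n x ?_)
  rw [pow_succ', hn, mul_zero, LinearMap.zero_apply]

theorem RingHom.apply_eq_self_of_pow_char_eq_self {F : Type*} [Field F] (p : ℕ) [Fact p.Prime]
    [CharP F p] (f : F →+* F) {y : F} (hy : y ^ p = y) : f y = y := by
  obtain ⟨n, rfl⟩ := (mem_bot_iff_intCast p F).mp ((Subfield.mem_bot_iff_pow_eq_self F p).mpr hy)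
  exact map_intCast f n

theorem IsGalois.mem_range_algebraMap_of_apply_eq_self {K L : Type*} [Field K] [Field L]
    [Algebra K L] [FiniteDimensional K L] [IsGalois K L] {σ : Gal(L/K)}
    (hσ : ∀ g, g ∈ Subgroup.zpowers σ) {x : L} (hx : σ x = x) :
    x ∈ Set.range (algebraMap K L) := by
  refine (IsGalois.mem_range_algebraMap_iff_fixed x).mpr fun g => ?_
  obtain ⟨n, rfl⟩ := mem_powers_iff_mem_zpowers.mpr (hσ g)
  rw [AlgEquiv.coe_pow]
  exact Function.iterate_fixed hx n

section Galois

variable {K L : Type*} [Field K] [Field L] [Algebra K L] [FiniteDimensional K L] [IsGalois K L]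
  (p : ℕ) [Fact p.Prime]

theorem exists_apply_eq_add_one_of_orderOf_eq_char [CharP K p] {σ : Gal(L/K)}
    (hσ : ∀ g, g ∈ Subgroup.zpowers σ) (hord : orderOf σ = p) : ∃ β : L, σ β = β + 1 := by
  have : CharP (Module.End K L) p := charP_of_injective_algebraMap' K p
  set D : Module.End K L := σ.toLinearMap - 1
  have hD : IsNilpotent D := isNilpotent_sub_one_of_pow_char_eq_one p <| by
    rw [← AlgEquiv.pow_toLinearMap, ← hord, pow_orderOf_eq_one, AlgEquiv.one_toLinearMap]
  have hD0 : D ≠ 0 := fun h => (Fact.out : p.Prime).one_lt.ne' <| by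
    have : σ = 1 := AlgEquiv.toLinearMap_injective <| by
      rw [AlgEquiv.one_toLinearMap]; exact sub_eq_zero.mp h
    rw [← hord, this, orderOf_one]
  obtain ⟨x, hx, hxx⟩ := Module.End.exists_apply_ne_zero_and_apply_apply_eq_zero hD hD0
  obtain ⟨c, hc⟩ := IsGalois.mem_range_algebraMap_of_apply_eq_self hσ (x := D x)
    (sub_eq_zero.mp hxx)
  have hc0 : c ≠ 0 := by rintro rfl; exact hx (by rw [← hc, map_zero])
  refine ⟨c⁻¹ • x, ?_⟩
  have hσx : σ x = x + algebraMap K L c := by rw [hc]; exact (add_sub_cancel x (σ x)).symm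
  rw [map_smul, hσx, smul_add, Algebra.smul_def c⁻¹ (algebraMap K L c), ← map_mul,
    inv_mul_cancel₀ hc0, map_one]

theorem not_surjective_pow_sub_self_of_apply_eq_add_one [CharP L p] {σ : Gal(L/K)}
    (hσ : ∀ g, g ∈ Subgroup.zpowers σ) {β : L} (hβ : σ β = β + 1) :
    ¬Function.Surjective (fun x : K => x ^ p - x) := by
  intro hAS
  obtain ⟨a, ha⟩ := IsGalois.mem_range_algebraMap_of_apply_eq_self hσ (x := β ^ p - β) <| by
    rw [map_sub, map_pow, hβ, add_pow_char, one_pow]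
    ring
  obtain ⟨c, rfl⟩ := hAS a
  set γ := β - algebraMap K L c
  have hγ : γ ^ p = γ := by
    simp only [map_sub, map_pow] at ha
    rw [sub_pow_char]
    linear_combination -ha
  have hσγ : σ γ = γ := (σ : L →+* L).apply_eq_self_of_pow_char_eq_self p hγ
  simp [γ, hβ] at hσγ

end Galois

/-- Let `K` be a field of characteristic `p > 0` on which the Artin–Schreier map
`℘(x) = x^p - x` is surjective. Then `K` has no Galois extension of degree `p`. -/
theorem no_degree_p_galois_extension_of_artin_schreier_surjective
    {K : Type*} [Field K] (p : ℕ) [Fact p.Prime] [CharP K p]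
    (hAS : Function.Surjective (fun x : K => x ^ p - x)) :
    ∀ (L : Type*) [Field L] [Algebra K L] [IsGalois K L], finrank K L ≠ p := by
  intro L _ _ _ hdim
  have : FiniteDimensional K L := .of_finrank_pos (hdim ▸ (Fact.out : p.Prime).pos)
  have : CharP L p := charP_of_injective_algebraMap' K p
  have hcard : Nat.card Gal(L/K) = p := by rw [IsGalois.card_aut_eq_finrank, hdim]
  obtain ⟨σ, hσ⟩ := (isCyclic_of_prime_card hcard).exists_generator
  obtain ⟨β, hβ⟩ := exists_apply_eq_add_one_of_orderOf_eq_char p hσ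
    ((orderOf_eq_card_of_forall_mem_zpowers hσ).trans hcard)
  exact not_surjective_pow_sub_self_of_apply_eq_add_one p hσ hβ hAS
end

section
/- Let K ⊆ L be fields with K relatively algebraically closed in L (every element of L algebraic over K lies in K), and let α be separable algebraic over K. Then K(α) is relatively algebraically closed in L(α). -/
/-!
Since `K` is algebraically closed in `L`, the minimal polynomial of `α` over `L`, a monic factor
of its minimal polynomial `f` over `K`, has coefficients integral over `K` and is therefore `f`
itself. Write `x ∈ L(α)` as `g(α)` with `g ∈ L[X]` of degree `< deg f`. If `x` is algebraic over
`K`, then so is `g(β)` for every root `β` of `f` in an algebraic closure, as `β` is an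
`L`-conjugate of `α`. By separability there are `deg f` such roots, so Lagrange interpolation
recovers `g` from its values at them; nodes and values all lie in the field of elements algebraic
over `K`, hence so do the coefficients of `g`. Lying in `L`, they lie in `K`, and `x ∈ K(α)`.
-/

open Polynomial IntermediateField

theorem Polynomial.mem_lifts_of_eval_mem {F : Type*} [Field F] (A : Subfield F) {p : F[X]}
    {s : Finset F} (hsA : ∀ x ∈ s, x ∈ A) (hp : p.degree < s.card)
    (hval : ∀ x ∈ s, p.eval x ∈ A) : p ∈ lifts A.subtype := by
  classical
  have hC : ∀ a ∈ A, C a ∈ liftsRing A.subtype := fun a ha =>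
    (lifts_iff_liftsRing _ _).1 (C_mem_lifts A.subtype ⟨a, ha⟩)
  rw [lifts_iff_liftsRing, Lagrange.eq_interpolate (v := id) (Set.injOn_id _) hp,
    Lagrange.interpolate_apply]
  refine sum_mem fun x hx => mul_mem (hC _ (hval x hx)) (prod_mem fun y hy => ?_)
  have hy := hsA y (Finset.mem_of_mem_erase hy)
  exact mul_mem (hC _ (inv_mem (sub_mem (hsA x hx) hy)))
    (sub_mem ((lifts_iff_liftsRing _ _).1 (X_mem_lifts _)) (hC _ hy))

theorem IntermediateField.exists_aeval_eq_of_mem_adjoin_simple {F E : Type*} [Field F] [Field E]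
    [Algebra F E] {α : E} (hα : IsIntegral F α) {x : E} (hx : x ∈ F⟮α⟯) :
    ∃ g : F[X], g.natDegree < (minpoly F α).natDegree ∧ aeval α g = x := by
  obtain ⟨g, hg, hgx⟩ := (adjoin.powerBasis hα).exists_eq_aeval ⟨x, hx⟩
  refine ⟨g, adjoin.powerBasis_dim hα ▸ hg, ?_⟩
  have := congrArg (algebraMap F⟮α⟯ E) hgx.symm
  rwa [← aeval_algebraMap_apply, adjoin.powerBasis_gen, AdjoinSimple.algebraMap_gen] at this

section Tower

variable {K L E : Type*} [Field K] [Field L] [Field E] [Algebra K L] [Algebra K E] [Algebra L E]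
  [IsScalarTower K L E]

theorem minpoly_eq_map_of_algebraicClosure_eq_bot (h : algebraicClosure K L = ⊥)
    {z : E} (hz : IsIntegral K z) : minpoly L z = (minpoly K z).map (algebraMap K L) := by
  obtain ⟨q, hq⟩ : minpoly L z ∈ lifts (algebraMap K L) := by
    have hint := integralClosure.mem_lifts_of_monic_of_dvd_map L (minpoly.monic hz)
      (minpoly.monic hz.tower_top) (minpoly.dvd_map_of_isScalarTower K L z)
    rw [lifts_iff_coeff_lifts] at hint ⊢
    intro n
    obtain ⟨c, hc⟩ := hint n
    rw [← hc, ← mem_bot, ← h, mem_algebraicClosure_iff, isAlgebraic_iff_isIntegral]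
    exact c.2
  rw [coe_mapRingHom] at hq
  have hq_monic : q.Monic :=
    (monic_map_iff (f := algebraMap K L)).1 (hq ▸ minpoly.monic hz.tower_top)
  have hq_irr : Irreducible q :=
    hq_monic.irreducible_of_irreducible_map _ _ (hq ▸ minpoly.irreducible hz.tower_top)
  have hqz : aeval z q = 0 := by rw [← aeval_map_algebraMap L, hq, minpoly.aeval]
  rw [← hq, ← minpoly.eq_of_irreducible_of_monic hq_irr hqz hq_monic]

theorem IsAlgebraic.aeval_of_aeval_minpoly_eq_zero {Ω : Type*} [CommRing Ω] [Algebra K Ω]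
    [Algebra L Ω] [IsScalarTower K L Ω] {α : E} {β : Ω} (hβ : aeval β (minpoly L α) = 0)
    {g : L[X]} (hg : IsAlgebraic K (aeval α g)) : IsAlgebraic K (aeval β g) := by
  obtain ⟨P, hP0, hP⟩ := hg
  have hdvd : minpoly L α ∣ (P.map (algebraMap K L)).comp g :=
    minpoly.dvd L α (by rw [aeval_comp, aeval_map_algebraMap, hP])
  refine ⟨P, hP0, ?_⟩
  rw [← aeval_map_algebraMap L, ← aeval_comp]
  exact aeval_eq_zero_of_dvd_aeval_eq_zero hdvd hβ

theorem isAlgebraic_coeff_of_isAlgebraic_aeval {α : E} (hsep : (minpoly K α).Separable)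
    (hmin : minpoly L α = (minpoly K α).map (algebraMap K L)) {g : L[X]}
    (hg : g.natDegree < (minpoly K α).natDegree) (hgα : IsAlgebraic K (aeval α g)) (n : ℕ) :
    IsAlgebraic K (g.coeff n) := by
  classical
  let Ω := AlgebraicClosure L
  let roots := ((minpoly K α).rootSet Ω).toFinset
  have hcard : roots.card = (minpoly K α).natDegree := by
    rw [Set.toFinset_card, card_rootSet_eq_natDegree hsep (IsAlgClosed.splits _)]
  have hroot : ∀ β ∈ roots, aeval β (minpoly K α) = 0 := fun β hβ =>
    (mem_rootSet.1 (Set.mem_toFinset.1 hβ)).2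
  have hlifts := (g.map (algebraMap L Ω)).mem_lifts_of_eval_mem
    (algebraicClosure K Ω).toSubfield (s := roots)
    (fun β hβ => mem_algebraicClosure_iff.2 ⟨_, hsep.ne_zero, hroot β hβ⟩)
    (degree_map_le.trans_lt (degree_le_natDegree.trans_lt (by rw [hcard]; exact_mod_cast hg)))
    (fun β hβ => by
      rw [eval_map_algebraMap]
      refine mem_algebraicClosure_iff.2 (hgα.aeval_of_aeval_minpoly_eq_zero ?_)
      rw [hmin, aeval_map_algebraMap, hroot β hβ])
  obtain ⟨c, hc⟩ := (lifts_iff_coeff_lifts _).1 hlifts n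
  rw [coeff_map] at hc
  rw [← isAlgebraic_algebraMap_iff (algebraMap L Ω).injective, ← hc]
  exact mem_algebraicClosure_iff.1 c.2

theorem mem_adjoin_simple_of_isAlgebraic (h : algebraicClosure K L = ⊥) {α : E}
    (hsep : (minpoly K α).Separable) {x : E} (hx : x ∈ L⟮α⟯) (hxK : IsAlgebraic K x) :
    x ∈ K⟮α⟯ := by
  have hα : IsIntegral K α := IsSeparable.isIntegral hsep
  have hmin := minpoly_eq_map_of_algebraicClosure_eq_bot h hα
  obtain ⟨g, hg, rfl⟩ := exists_aeval_eq_of_mem_adjoin_simple hα.tower_top hx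
  rw [hmin, natDegree_map] at hg
  obtain ⟨q, rfl⟩ : g ∈ lifts (algebraMap K L) := (lifts_iff_coeff_lifts g).2 fun n =>
    mem_bot.1 (h ▸ mem_algebraicClosure_iff.2
      (isAlgebraic_coeff_of_isAlgebraic_aeval hsep hmin hg hxK n))
  rw [coe_mapRingHom, aeval_map_algebraMap]
  exact algebra_adjoin_le_adjoin K _ (aeval_mem_adjoin_singleton K α)

end Tower

/-- Let `K ⊆ L` be subfields of a field `M`, with `K` relatively algebraically closed in
`L` (every element of `L` algebraic over `K` lies in `K`), and let `α ∈ M` be separable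
algebraic over `K`. Then `K(α)` is relatively algebraically closed in `L(α)`. -/
theorem adjoin_separable_preserves_relatively_algebraically_closed
    {M : Type*} [Field M] (K L : Subfield M) (hKL : K ≤ L)
    (hrel : ∀ x : M, x ∈ L → IsAlgebraic K x → x ∈ K)
    (α : M) (hsep : (minpoly K α).Separable) :
    ∀ x : M, x ∈ Subfield.closure ((L : Set M) ∪ {α}) →
      IsAlgebraic (Subfield.closure ((K : Set M) ∪ {α})) x →
      x ∈ Subfield.closure ((K : Set M) ∪ {α}) := by
  intro x hx hxα
  let L' : IntermediateField K M := L.toIntermediateField fun k => hKL k.2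
  have hL' : algebraicClosure K L' = ⊥ := by
    refine eq_bot_iff.2 fun y hy => mem_bot.2 ⟨⟨y, hrel y y.2 ?_⟩, rfl⟩
    exact IntermediateField.isAlgebraic_iff.1 (mem_algebraicClosure_iff.1 hy)
  have hKα : Subfield.closure ((K : Set M) ∪ {α}) = (K⟮α⟯).toSubfield := by
    rw [adjoin_toSubfield, show Set.range (algebraMap K M) = K from Subtype.range_coe]
  have hLα : Subfield.closure ((L : Set M) ∪ {α}) = (L'⟮α⟯).toSubfield := by
    rw [adjoin_toSubfield, show Set.range (algebraMap L' M) = L from Subtype.range_coe]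
  rw [hLα] at hx
  rw [hKα] at hxα ⊢
  have : FiniteDimensional K K⟮α⟯ := adjoin.finiteDimensional (IsSeparable.isIntegral hsep)
  exact mem_adjoin_simple_of_isAlgebraic hL' hsep hx (hxα.restrictScalars (S := K⟮α⟯) K)
end
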